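/- Fix r > 0 and let n = k(r+1) for an integer k ≥ 1. Let V = (ℤ/kℤ) × [r+1] and let E be the family of all (r+1)-element subsets {(v_1,c_1),…,(v_{r+1},c_{r+1})} of V whose colors c_1,…,c_{r+1} are pairwise distinct (hence {c_i} = [r+1]) and whose values satisfy v_1 + ⋯ + v_{r+1} ≡ 0 (mod k). Then: (a) any two distinct members A, B of E satisfy |A ∩ B| < r; (b) every pair of members of E is r-orthogonal; (c) |E| = k^r. -/
import Mathlib


section
variable {V : Type*} [Fintype V] [DecidableEq V]

/-- Membership in the class `K_r` of families of subsets of `V`: rules (k0), (k1), (k2). -/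
def MemK (r : ℕ) (E : Set (Finset V)) : Prop :=
  (∀ X : Finset V, X.card ≤ r → X ∈ E) ∧
  (∀ A ∈ E, Aᶜ ∈ E) ∧
  (∀ A ∈ E, ∀ B ∈ E, r ≤ (A ∩ B).card → A ∪ B ∈ E)

/-- Membership in the class `K⊥_r`: only rules (k0) and (k1). -/
def MemKbot (r : ℕ) (E : Set (Finset V)) : Prop :=
  (∀ X : Finset V, X.card ≤ r → X ∈ E) ∧
  (∀ A ∈ E, Aᶜ ∈ E)

/-- Closure in `K_r`. -/
def clr (r : ℕ) (H : Set (Finset V)) : Set (Finset V) :=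
  ⋂₀ {E | MemK r E ∧ H ⊆ E}

/-- Closure in `K⊥_r`. -/
def clbot (r : ℕ) (H : Set (Finset V)) : Set (Finset V) :=
  ⋂₀ {E | MemKbot r E ∧ H ⊆ E}

/-- `A` and `B` are `r`-orthogonal. -/
def Ortho (r : ℕ) (A B : Finset V) : Prop :=
  clr r {A, B} = clbot r {A, B}

-- auxiliary
lemma ortho_aux (r : ℕ) (hr : 0 < r) (A B : Finset V)
    (hA : A.card = r + 1) (hB : B.card = r + 1)
    (hAB : A = B ∨ (A ∩ B).card < r) : Ortho r A B := by
  set S : Set (Finset V) :=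
    {X | X.card ≤ r ∨ Xᶜ.card ≤ r ∨ X = A ∨ X = B ∨ X = Aᶜ ∨ X = Bᶜ} with hS
  have hAS : A ∈ S := Or.inr (Or.inr (Or.inl rfl))
  have hBS : B ∈ S := Or.inr (Or.inr (Or.inr (Or.inl rfl)))
  have hAcS : Aᶜ ∈ S := Or.inr (Or.inr (Or.inr (Or.inr (Or.inl rfl))))
  have hBcS : Bᶜ ∈ S := Or.inr (Or.inr (Or.inr (Or.inr (Or.inr rfl))))
  have hSsub : S ⊆ clbot r {A, B} := by
    intro X hX E ⟨⟨h0, h1⟩, hHE⟩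
    have hAE : A ∈ E := hHE (by simp)
    have hBE : B ∈ E := hHE (by simp)
    rcases hX with h | h | rfl | rfl | rfl | rfl
    · exact h0 X h
    · have := h1 Xᶜ (h0 Xᶜ h); rwa [compl_compl] at this
    · exact hAE
    · exact hBE
    · exact h1 A hAE
    · exact h1 B hBE
  -- the (C, Dᶜ) pattern
  have hmix : ∀ C D : Finset V, C.card = r + 1 → D.card = r + 1 →
      (C ∩ D).card < r → r ≤ (C ∩ Dᶜ).card →
      C ∪ Dᶜ = Dᶜ ∨ (C ∪ Dᶜ)ᶜ.card ≤ r := by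
    intro C D hC hD _hlt hle
    have hsd : C ∩ Dᶜ = C \ D := by ext x; simp [Finset.mem_sdiff]
    have h1 : (C ∩ D).card + (C \ D).card = C.card := Finset.card_inter_add_card_sdiff C D
    have h2 : (C ∩ D).card + (D \ C).card = D.card := by
      rw [Finset.inter_comm]; exact Finset.card_inter_add_card_sdiff D C
    rw [hsd] at hle
    by_cases hz : (C ∩ D).card = 0
    · left
      have hemp : C ∩ D = ∅ := Finset.card_eq_zero.mp hz
      have hsub : C ⊆ Dᶜ := by
        intro x hx
        rw [Finset.mem_compl]
        intro hxD
        exact Finset.notMem_empty x (hemp ▸ Finset.mem_inter.mpr ⟨hx, hxD⟩)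
      exact Finset.union_eq_right.mpr hsub
    · right
      have : (C ∪ Dᶜ)ᶜ = D \ C := by
        ext x; simp [Finset.mem_sdiff, and_comm]
      rw [this]; omega
  have hpairwise : ∀ X Y : Finset V, X ∈ ({A, B, Aᶜ, Bᶜ} : Set (Finset V)) →
      Y ∈ ({A, B, Aᶜ, Bᶜ} : Set (Finset V)) → r ≤ (X ∩ Y).card → X ∪ Y ∈ S := by
    have hIC : ∀ C : Finset V, (C ∩ Cᶜ).card = 0 := by
      intro C; rw [Finset.inter_compl]; exact Finset.card_empty
    have hCI : ∀ C : Finset V, (Cᶜ ∩ C).card = 0 := by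
      intro C; rw [Finset.inter_comm, Finset.inter_compl]; exact Finset.card_empty
    have hcc : ∀ C D : Finset V, Cᶜ ∪ Dᶜ = (C ∩ D)ᶜ := by
      intro C D; rw [Finset.compl_inter]
    rcases hAB with rfl | hlt
    · -- A = B
      intro X Y hX hY hXY
      simp only [Set.mem_insert_iff, Set.mem_singleton_iff] at hX hY
      have hX' : X = A ∨ X = Aᶜ := by tauto
      have hY' : Y = A ∨ Y = Aᶜ := by tauto
      rcases hX' with h1 | h1 <;> rcases hY' with h2 | h2 <;>
        rw [h1, h2] at hXY ⊢
      · rw [Finset.union_self]; exact hAS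
      · rw [hIC A] at hXY; omega
      · rw [hCI A] at hXY; omega
      · rw [Finset.union_self]; exact hAcS
    · -- A ≠ B
      have hBA : (B ∩ A).card < r := by rwa [Finset.inter_comm]
      intro X Y hX hY hXY
      simp only [Set.mem_insert_iff, Set.mem_singleton_iff] at hX hY
      rcases hX with h1 | h1 | h1 | h1 <;> rcases hY with h2 | h2 | h2 | h2 <;>
        rw [h1, h2] at hXY ⊢
      · rw [Finset.union_self]; exact hAS
      · omega
      · rw [hIC A] at hXY; omega
      · rcases hmix A B hA hB hlt hXY with h | h
        · rw [h]; exact hBcS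
        · exact Or.inr (Or.inl h)
      · rw [Finset.inter_comm] at hXY; omega
      · rw [Finset.union_self]; exact hBS
      · rcases hmix B A hB hA hBA hXY with h | h
        · rw [h]; exact hAcS
        · exact Or.inr (Or.inl h)
      · rw [hIC B] at hXY; omega
      · rw [hCI A] at hXY; omega
      · rcases hmix B A hB hA hBA (by rwa [Finset.inter_comm] at hXY) with h | h
        · rw [Finset.union_comm, h]; exact hAcS
        · rw [Finset.union_comm]; exact Or.inr (Or.inl h)
      · rw [Finset.union_self]; exact hAcS
      · right; left
        rw [hcc A B, Finset.card_compl, Finset.card_compl]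
        have := Finset.card_le_card (Finset.inter_subset_left : A ∩ B ⊆ A)
        omega
      · rcases hmix A B hA hB hlt (by rwa [Finset.inter_comm] at hXY) with h | h
        · rw [Finset.union_comm, h]; exact hBcS
        · rw [Finset.union_comm]; exact Or.inr (Or.inl h)
      · rw [hCI B] at hXY; omega
      · right; left
        rw [Finset.union_comm, hcc A B, Finset.card_compl, Finset.card_compl]
        have := Finset.card_le_card (Finset.inter_subset_left : A ∩ B ⊆ A)
        omega
      · rw [Finset.union_self]; exact hBcS
  have hSK : MemK r S ∧ ({A, B} : Set (Finset V)) ⊆ S := by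
    refine ⟨⟨fun X h => Or.inl h, ?_, ?_⟩, ?_⟩
    · rintro X (h | h | rfl | rfl | rfl | rfl)
      · right; left; rwa [compl_compl]
      · left; exact h
      · exact hAcS
      · exact hBcS
      · rw [compl_compl]; exact hAS
      · rw [compl_compl]; exact hBS
    · intro X hX Y hY hle
      rcases hX with hX | hX | hX
      · have h1 : (X ∩ Y).card ≤ X.card := Finset.card_le_card Finset.inter_subset_left
        have h2 : X ∩ Y = X :=
          Finset.eq_of_subset_of_card_le Finset.inter_subset_left (by omega)
        have hsub : X ⊆ Y := by rw [← h2]; exact Finset.inter_subset_right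
        rw [Finset.union_eq_right.mpr hsub]
        exact hY
      · right; left
        calc (X ∪ Y)ᶜ.card ≤ Xᶜ.card :=
              Finset.card_le_card (by rw [Finset.compl_union]; exact Finset.inter_subset_left)
          _ ≤ r := hX
      · rcases hY with hY | hY | hY
        · have h1 : (X ∩ Y).card ≤ Y.card := Finset.card_le_card Finset.inter_subset_right
          have h2 : X ∩ Y = Y :=
            Finset.eq_of_subset_of_card_le Finset.inter_subset_right (by omega)
          have hsub : Y ⊆ X := by rw [← h2]; exact Finset.inter_subset_left
          rw [Finset.union_eq_left.mpr hsub]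
          right; right; exact hX
        · right; left
          calc (X ∪ Y)ᶜ.card ≤ Yᶜ.card :=
                Finset.card_le_card (by rw [Finset.compl_union]; exact Finset.inter_subset_right)
            _ ≤ r := hY
        · exact hpairwise X Y (by tauto) (by tauto) hle
    · rintro X (rfl | rfl)
      · exact hAS
      · exact hBS
  apply Set.Subset.antisymm
  · intro X hX
    exact hSsub (hX S hSK)
  · intro X hX E ⟨hE, hHE⟩
    exact hX E ⟨⟨hE.1, hE.2.1⟩, hHE⟩

end

/-- The family of all `(r+1)`-element subsets of `(ℤ/kℤ) × [r+1]` whose colors are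
pairwise distinct and whose values sum to `0` modulo `k`. -/
def Econ (r k : ℕ) : Set (Finset (ZMod k × Fin (r + 1))) :=
  {A | A.card = r + 1 ∧
    (∀ p ∈ A, ∀ q ∈ A, p.2 = q.2 → p = q) ∧
    (∑ p ∈ A, p.1) = 0}

namespace EconAux

variable (r k : ℕ) [NeZero k]

/-- the encoding of a function as a rainbow set -/
def F (f : Fin (r + 1) → ZMod k) : Finset (ZMod k × Fin (r + 1)) :=
  Finset.univ.image (fun c => (f c, c))

lemma F_inj_comp (f : Fin (r + 1) → ZMod k) :
    Function.Injective (fun c : Fin (r + 1) => (f c, c)) := by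
  intro a b h; exact congrArg Prod.snd h

lemma mem_F {f : Fin (r + 1) → ZMod k} {p : ZMod k × Fin (r + 1)} :
    p ∈ F r k f ↔ p = (f p.2, p.2) := by
  constructor
  · intro h
    obtain ⟨c, _, hc⟩ := Finset.mem_image.mp h
    subst hc; rfl
  · intro h; rw [h]; exact Finset.mem_image_of_mem _ (Finset.mem_univ _)

lemma F_injective : Function.Injective (F r k) := by
  intro f g h
  funext c
  have : (f c, c) ∈ F r k g := by rw [← h]; exact Finset.mem_image_of_mem _ (Finset.mem_univ _)
  have := (mem_F r k).mp this
  exact congrArg Prod.fst this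

lemma card_F (f : Fin (r + 1) → ZMod k) : (F r k f).card = r + 1 := by
  rw [F, Finset.card_image_of_injective _ (F_inj_comp r k f), Finset.card_univ, Fintype.card_fin]

lemma sum_F (f : Fin (r + 1) → ZMod k) : (∑ p ∈ F r k f, p.1) = ∑ c, f c := by
  rw [F, Finset.sum_image (fun a _ b _ h => F_inj_comp r k f h)]

lemma econ_eq : Econ r k = F r k '' {f | ∑ c, f c = 0} := by
  ext A
  constructor
  · rintro ⟨hcard, hcol, hsum⟩
    -- snd : A → Fin (r+1) is bijective
    have hinj : Function.Injective (fun p : A => (p : ZMod k × Fin (r + 1)).2) := by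
      intro p q h
      exact Subtype.ext (hcol p p.2 q q.2 h)
    have hbij : Function.Bijective (fun p : A => (p : ZMod k × Fin (r + 1)).2) := by
      rw [Fintype.bijective_iff_injective_and_card]
      refine ⟨hinj, ?_⟩
      simp [hcard]
    let e := Equiv.ofBijective _ hbij
    set f : Fin (r + 1) → ZMod k := fun c => ((e.symm c : A) : ZMod k × Fin (r + 1)).1 with hf
    have key : ∀ c, ((e.symm c : A) : ZMod k × Fin (r + 1)) = (f c, c) := by
      intro c
      have h2 : ((e.symm c : A) : ZMod k × Fin (r + 1)).2 = c := e.apply_symm_apply c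
      exact Prod.ext rfl h2
    have hFA : F r k f = A := by
      apply Finset.eq_of_subset_of_card_le
      · intro p hp
        obtain ⟨c, _, hc⟩ := Finset.mem_image.mp hp
        rw [← hc, ← key c]
        exact (e.symm c).2
      · rw [hcard, card_F]
    refine ⟨f, ?_, hFA⟩
    have : (∑ p ∈ F r k f, p.1) = ∑ c, f c := sum_F r k f
    rw [hFA, hsum] at this
    exact this.symm
  · rintro ⟨f, hf, rfl⟩
    refine ⟨card_F r k f, ?_, by rw [sum_F]; exact hf⟩
    intro p hp q hq h
    rw [(mem_F r k).mp hp, (mem_F r k).mp hq, h]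

/-- counting the functions with sum zero -/
def zeroSumEquiv : (Fin r → ZMod k) ≃ {f : Fin (r + 1) → ZMod k // ∑ c, f c = 0} where
  toFun g := ⟨Fin.snoc g (-∑ i, g i), by
    rw [Fin.sum_univ_castSucc]
    simp⟩
  invFun f := fun i => f.1 i.castSucc
  left_inv g := by funext i; simp
  right_inv f := by
    ext c
    refine Fin.lastCases ?_ ?_ c
    · simp only [Fin.snoc_last]
      have := f.2
      rw [Fin.sum_univ_castSucc] at this
      linear_combination -this
    · intro i; simp

lemma ncard_econ : (Econ r k).ncard = k ^ r := by
  rw [econ_eq, Set.ncard_image_of_injective _ (F_injective r k), ← Nat.card_coe_set_eq]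
  have e2 : {f : Fin (r + 1) → ZMod k | ∑ c, f c = 0} ≃ (Fin r → ZMod k) :=
    (Equiv.setCongr rfl).trans (zeroSumEquiv r k).symm
  rw [Nat.card_congr e2, Nat.card_eq_fintype_card, Fintype.card_fun]
  simp [ZMod.card]

lemma small_inter (hr : 0 < r) :
    ∀ A ∈ Econ r k, ∀ B ∈ Econ r k, A ≠ B → (A ∩ B).card < r := by
  have he := econ_eq r k
  intro A hA B hB hne
  rw [he] at hA hB
  obtain ⟨f, hf, rfl⟩ := hA
  obtain ⟨g, hg, rfl⟩ := hB
  have hfg : f ≠ g := fun h => hne (by rw [h])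
  by_contra hcon
  push_neg at hcon
  -- F f ∩ F g = image of agreement set
  have hint : F r k f ∩ F r k g =
      (Finset.univ.filter (fun c => f c = g c)).image (fun c => (f c, c)) := by
    ext p
    simp only [Finset.mem_inter, mem_F, Finset.mem_image, Finset.mem_filter, Finset.mem_univ,
      true_and]
    constructor
    · rintro ⟨h1, h2⟩
      refine ⟨p.2, ?_, h1.symm⟩
      have := h1.symm.trans h2
      exact (Prod.ext_iff.mp this).1
    · rintro ⟨c, hc, rfl⟩
      exact ⟨rfl, by rw [hc]⟩
  have hcard : (F r k f ∩ F r k g).card = (Finset.univ.filter (fun c => f c = g c)).card := by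
    rw [hint, Finset.card_image_of_injective _ (F_inj_comp r k f)]
  rw [hcard] at hcon
  -- disagreement set has card ≤ 1
  set D := Finset.univ.filter (fun c => ¬ f c = g c) with hD
  have hsplit : (Finset.univ.filter (fun c => f c = g c)).card + D.card = r + 1 := by
    rw [hD, Finset.card_filter_add_card_filter_not, Finset.card_univ, Fintype.card_fin]
  have hD1 : D.card ≤ 1 := by omega
  have hDne : D.Nonempty := by
    rcases Finset.eq_empty_or_nonempty D with h | h
    · exfalso; apply hfg; funext c
      by_contra hc
      exact Finset.notMem_empty c (h ▸ (Finset.mem_filter.mpr ⟨Finset.mem_univ c, hc⟩))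
    · exact h
  obtain ⟨c₀, hc₀⟩ := Finset.card_eq_one.mp (le_antisymm hD1 hDne.card_pos)
  -- sums over D are equal since totals and agreement parts are equal
  have hsum_eq : ∑ c ∈ D, f c = ∑ c ∈ D, g c := by
    have h1 := Finset.sum_filter_add_sum_filter_not Finset.univ (fun c => f c = g c) f
    have h2 := Finset.sum_filter_add_sum_filter_not Finset.univ (fun c => f c = g c) g
    have h3 : ∑ c ∈ Finset.univ.filter (fun c => f c = g c), f c
        = ∑ c ∈ Finset.univ.filter (fun c => f c = g c), g c :=
      Finset.sum_congr rfl (fun c hc => (Finset.mem_filter.mp hc).2)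
    rw [hf] at h1
    rw [hg] at h2
    rw [← hD] at h1 h2
    linear_combination h1 - h2 - h3
  rw [hc₀, Finset.sum_singleton, Finset.sum_singleton] at hsum_eq
  have : c₀ ∈ D := hc₀ ▸ Finset.mem_singleton_self c₀
  exact (Finset.mem_filter.mp this).2 hsum_eq

end EconAux

theorem cross_free_family_construction (r k : ℕ) (hr : 0 < r) [NeZero k] :
    (∀ A ∈ Econ r k, ∀ B ∈ Econ r k, A ≠ B → (A ∩ B).card < r) ∧
    (∀ A ∈ Econ r k, ∀ B ∈ Econ r k, Ortho r A B) ∧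
    (Econ r k).ncard = k ^ r := by
  refine ⟨EconAux.small_inter r k hr, ?_, EconAux.ncard_econ r k⟩
  intro A hA B hB
  refine ortho_aux r hr A B hA.1 hB.1 ?_
  by_cases h : A = B
  · exact Or.inl h
  · exact Or.inr (EconAux.small_inter r k hr A hA B hB h)
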